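/- arXiv:2308.08798 — 2 statements merged into one kernel-verified Lean document; each statement's English description precedes it below -/
import Mathlib

section
/- On the n × n grid, the diamond sets B(1), B(2), …, B(n−1) form a basis (over 𝔽₂, with symmetric difference as addition) of the space of all totally even edge sets. Equivalently: every totally even set E is a symmetric difference of a unique subcollection of the diamond sets. -/
namespace Slitherlink

/-- Vertices of grids: integer points of the plane. -/
abbrev V : Type := ℤ × ℤ

/-- Edges: unordered pairs of vertices. -/
abbrev Edge : Type := Sym2 V

/-- `p` is a vertex of the `m × n` grid. -/
def gridVertex (m n : ℤ) (p : V) : Prop :=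
  1 ≤ p.1 ∧ p.1 ≤ m ∧ 1 ≤ p.2 ∧ p.2 ≤ n

/-- `e` is an edge of the `m × n` grid: a unit segment between grid vertices. -/
def gridEdge (m n : ℤ) (e : Edge) : Prop :=
  ∃ p q : V, e = s(p, q) ∧ gridVertex m n p ∧ gridVertex m n q ∧
    ((q.1 = p.1 + 1 ∧ q.2 = p.2) ∨ (q.1 = p.1 ∧ q.2 = p.2 + 1))

/-- The four boundary edges of the unit cell with lower-left corner `(a, b)`. -/
def cellEdges (a b : ℤ) : Set Edge :=
  {s((a, b), (a + 1, b)), s((a, b), (a, b + 1)),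
   s((a + 1, b), (a + 1, b + 1)), s((a, b + 1), (a + 1, b + 1))}

/-- `(a, b)` is the lower-left corner of a cell of the `m × n` grid. -/
def isCell (m n a b : ℤ) : Prop := 1 ≤ a ∧ a + 1 ≤ m ∧ 1 ≤ b ∧ b + 1 ≤ n

/-- Number of edges of `E` incident with the vertex `p`. -/
noncomputable def degree (E : Set Edge) (p : V) : ℕ := {e ∈ E | p ∈ e}.ncard

/-- Number of edges of `E` among the four boundary edges of the cell at `(a, b)`. -/
noncomputable def cellCount (E : Set Edge) (a b : ℤ) : ℕ := (E ∩ cellEdges a b).ncard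

/-- A set of edges of the `m × n` grid is totally even if every vertex is incident with an
even number of its edges and every cell contains an even number of its edges. -/
def TotallyEven (m n : ℤ) (E : Set Edge) : Prop :=
  (∀ e ∈ E, gridEdge m n e) ∧
  (∀ p : V, Even (degree E p)) ∧
  (∀ a b : ℤ, isCell m n a b → Even (cellCount E a b))

/-- The graph on `V` whose edges are the members of `C`. -/
def cycleGraph (C : Set Edge) : SimpleGraph V where
  Adj p q := p ≠ q ∧ s(p, q) ∈ C
  symm := by
    constructor
    intro p q h
    refine ⟨h.1.symm, ?_⟩
    rw [Sym2.eq_swap]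
    exact h.2
  loopless := by constructor; intro p h; exact h.1 rfl

/-- `C` is a cycle in the `m × n` grid: a nonempty connected 2-regular subgraph. -/
def IsCycle (m n : ℤ) (C : Set Edge) : Prop :=
  C.Nonempty ∧ (∀ e ∈ C, gridEdge m n e) ∧
  (∀ p : V, degree C p = 0 ∨ degree C p = 2) ∧
  (∀ p q : V, (∃ e ∈ C, p ∈ e) → (∃ e ∈ C, q ∈ e) → (cycleGraph C).Reachable p q)

/-- Two edge sets have the same signature on the `m × n` grid. -/
def SameSignature (m n : ℤ) (C₁ C₂ : Set Edge) : Prop :=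
  ∀ a b : ℤ, isCell m n a b → cellCount C₁ a b = cellCount C₂ a b

/-- Membership in the closed diamond `D(i)` of the `n × n` grid. -/
def inDiamond (n i : ℤ) (p : V) : Prop :=
  i + 1 ≤ p.1 + p.2 ∧ p.1 + p.2 ≤ 2 * n - i + 1 ∧ -i ≤ p.1 - p.2 ∧ p.1 - p.2 ≤ i

/-- The diamond edge set `B(i)`: all edges of the `n × n` grid contained in `D(i)`. -/
def diamondSet (n i : ℤ) : Set Edge :=
  {e | gridEdge n n e ∧ ∀ p ∈ e, inDiamond n i p}

/-- The symmetric difference of two edge sets. -/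
def sdiff (A B : Set Edge) : Set Edge := (A \ B) ∪ (B \ A)


/-! ### Auxiliary definitions and lemmas -/

def hedge (x y : ℤ) : Edge := s((x,y),(x+1,y))
def vedge (x y : ℤ) : Edge := s((x,y),(x,y+1))

open Classical in
noncomputable def eX (E : Set Edge) (e : Edge) : ℕ := if e ∈ E then 1 else 0

open Classical in
noncomputable def cnt (E : Set Edge) (l u : ℤ) : ℕ :=
  ((Finset.Icc l u).filter fun i => vedge 1 i ∈ E).card

lemma eX_le_one (E : Set Edge) (e : Edge) : eX E e ≤ 1 := by
  rw [eX]; split <;> omega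

lemma eX_eq_one_iff {E : Set Edge} {e : Edge} : eX E e = 1 ↔ e ∈ E := by
  rw [eX]; split <;> simp_all

lemma eX_eq_zero_of {E : Set Edge} {e : Edge} (h : e ∉ E) : eX E e = 0 := by
  rw [eX]; split <;> simp_all

lemma hedge_inj {x y x' y' : ℤ} : hedge x y = hedge x' y' ↔ x = x' ∧ y = y' := by
  constructor
  · intro h
    rw [hedge, hedge, Sym2.eq_iff] at h
    rcases h with ⟨h1,h2⟩|⟨h1,h2⟩ <;> simp [Prod.ext_iff] at h1 h2 <;> omega
  · rintro ⟨rfl, rfl⟩; rfl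

lemma vedge_inj {x y x' y' : ℤ} : vedge x y = vedge x' y' ↔ x = x' ∧ y = y' := by
  constructor
  · intro h
    rw [vedge, vedge, Sym2.eq_iff] at h
    rcases h with ⟨h1,h2⟩|⟨h1,h2⟩ <;> simp [Prod.ext_iff] at h1 h2 <;> omega
  · rintro ⟨rfl, rfl⟩; rfl

lemma hedge_ne_vedge {x y x' y' : ℤ} : hedge x y ≠ vedge x' y' := by
  intro h
  rw [hedge, vedge, Sym2.eq_iff] at h
  rcases h with ⟨h1,h2⟩|⟨h1,h2⟩ <;> simp [Prod.ext_iff] at h1 h2 <;> omega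

lemma mem_hedge {p : V} {x y : ℤ} : p ∈ hedge x y ↔ p = (x,y) ∨ p = (x+1,y) := by
  rw [hedge, Sym2.mem_iff]

lemma mem_vedge {p : V} {x y : ℤ} : p ∈ vedge x y ↔ p = (x,y) ∨ p = (x,y+1) := by
  rw [vedge, Sym2.mem_iff]

lemma gridEdge_iff {m n : ℤ} {e : Edge} :
    gridEdge m n e ↔ (∃ x y, e = hedge x y ∧ 1 ≤ x ∧ x + 1 ≤ m ∧ 1 ≤ y ∧ y ≤ n) ∨
      (∃ x y, e = vedge x y ∧ 1 ≤ x ∧ x ≤ m ∧ 1 ≤ y ∧ y + 1 ≤ n) := by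
  constructor
  · rintro ⟨⟨px,py⟩, ⟨qx,qy⟩, rfl, hp, hq, (⟨h1, h2⟩|⟨h1, h2⟩)⟩ <;>
      simp [gridVertex] at hp hq h1 h2
    · refine Or.inl ⟨px, py, ?_, by omega, by omega, by omega, by omega⟩
      rw [hedge, h1, h2]
    · refine Or.inr ⟨px, py, ?_, by omega, by omega, by omega, by omega⟩
      rw [vedge, h1, h2]
  · rintro (⟨x, y, rfl, h⟩|⟨x, y, rfl, h⟩)
    · exact ⟨(x,y), (x+1,y), rfl, ⟨by simpa using h.1, by simp; omega⟩,
        ⟨by simp; omega, by simp; omega⟩, by simp⟩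
    · exact ⟨(x,y), (x,y+1), rfl, ⟨by simpa using h.1, by simp; omega⟩,
        ⟨by simp; omega, by simp; omega⟩, by simp⟩

lemma hedge_grid_iff {m n x y : ℤ} :
    gridEdge m n (hedge x y) ↔ 1 ≤ x ∧ x + 1 ≤ m ∧ 1 ≤ y ∧ y ≤ n := by
  rw [gridEdge_iff]
  constructor
  · rintro (⟨x', y', he, hb⟩|⟨x', y', he, hb⟩)
    · obtain ⟨rfl, rfl⟩ := hedge_inj.1 he; exact hb
    · exact absurd he hedge_ne_vedge
  · intro h; exact Or.inl ⟨x, y, rfl, h⟩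

lemma vedge_grid_iff {m n x y : ℤ} :
    gridEdge m n (vedge x y) ↔ 1 ≤ x ∧ x ≤ m ∧ 1 ≤ y ∧ y + 1 ≤ n := by
  rw [gridEdge_iff]
  constructor
  · rintro (⟨x', y', he, hb⟩|⟨x', y', he, hb⟩)
    · exact absurd he.symm hedge_ne_vedge
    · obtain ⟨rfl, rfl⟩ := vedge_inj.1 he; exact hb
  · intro h; exact Or.inr ⟨x, y, rfl, h⟩

lemma hedge_mem_diamondSet {n i x y : ℤ} :
    hedge x y ∈ diamondSet n i ↔
      (1 ≤ x ∧ x + 1 ≤ n ∧ 1 ≤ y ∧ y ≤ n) ∧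
      max (y - x) (x - y + 1) ≤ i ∧ i ≤ min (x + y - 1) (2*n - x - y) := by
  rw [diamondSet, Set.mem_setOf_eq, hedge_grid_iff]
  constructor
  · rintro ⟨hg, hd⟩
    have h1 := hd (x,y) (by rw [hedge, Sym2.mem_iff]; left; rfl)
    have h2 := hd (x+1,y) (by rw [hedge, Sym2.mem_iff]; right; rfl)
    simp only [inDiamond] at h1 h2
    refine ⟨hg, ?_, ?_⟩ <;> simp at h1 h2 ⊢ <;> omega
  · rintro ⟨hb, hi⟩
    refine ⟨hb, ?_⟩
    intro p hp
    rw [hedge, Sym2.mem_iff] at hp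
    simp at hi
    rcases hp with rfl|rfl <;> simp [inDiamond] <;> omega

lemma vedge_mem_diamondSet {n i x y : ℤ} :
    vedge x y ∈ diamondSet n i ↔
      (1 ≤ x ∧ x ≤ n ∧ 1 ≤ y ∧ y + 1 ≤ n) ∧
      max (x - y) (y - x + 1) ≤ i ∧ i ≤ min (x + y - 1) (2*n - x - y) := by
  rw [diamondSet, Set.mem_setOf_eq, vedge_grid_iff]
  constructor
  · rintro ⟨hg, hd⟩
    have h1 := hd (x,y) (by rw [vedge, Sym2.mem_iff]; left; rfl)
    have h2 := hd (x,y+1) (by rw [vedge, Sym2.mem_iff]; right; rfl)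
    simp only [inDiamond] at h1 h2
    refine ⟨hg, ?_, ?_⟩ <;> simp at h1 h2 ⊢ <;> omega
  · rintro ⟨hb, hi⟩
    refine ⟨hb, ?_⟩
    intro p hp
    rw [vedge, Sym2.mem_iff] at hp
    simp at hi
    rcases hp with rfl|rfl <;> simp [inDiamond] <;> omega

lemma ncard_inter_pair (E : Set Edge) (a : Edge) (s : Set Edge) (hs : s.Finite)
    (ha : a ∉ s) : (E ∩ insert a s).ncard = eX E a + (E ∩ s).ncard := by
  by_cases h : a ∈ E
  · rw [show E ∩ insert a s = insert a (E ∩ s) by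
      ext e; simp only [Set.mem_inter_iff, Set.mem_insert_iff]
      constructor
      · rintro ⟨he, rfl|hes⟩; exacts [Or.inl rfl, Or.inr ⟨he, hes⟩]
      · rintro (rfl|⟨he, hes⟩); exacts [⟨h, Or.inl rfl⟩, ⟨he, Or.inr hes⟩]]
    rw [Set.ncard_insert_of_notMem (by simp; tauto) (hs.subset Set.inter_subset_right),
      eX_eq_one_iff.2 h]
    omega
  · rw [show E ∩ insert a s = E ∩ s by
      ext e; simp only [Set.mem_inter_iff, Set.mem_insert_iff]
      constructor
      · rintro ⟨he, rfl|hes⟩; exacts [absurd he h, ⟨he, hes⟩]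
      · rintro ⟨he, hes⟩; exact ⟨he, Or.inr hes⟩,
      eX_eq_zero_of h]
    omega

lemma ncard_inter_singleton (E : Set Edge) (d : Edge) : (E ∩ {d}).ncard = eX E d := by
  rw [show ({d} : Set Edge) = insert d ∅ by simp,
    ncard_inter_pair E d ∅ Set.finite_empty (Set.notMem_empty d)]
  simp

lemma ncard_inter_four (E : Set Edge) (a b c d : Edge) (hab : a ≠ b) (hac : a ≠ c)
    (had : a ≠ d) (hbc : b ≠ c) (hbd : b ≠ d) (hcd : c ≠ d) :
    (E ∩ {a, b, c, d}).ncard = eX E a + eX E b + eX E c + eX E d := by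
  rw [ncard_inter_pair E a {b,c,d} (Set.toFinite _) (by simp [hab,hac,had]),
    ncard_inter_pair E b {c,d} (Set.toFinite _) (by simp [hbc,hbd]),
    ncard_inter_pair E c {d} (Set.toFinite _) (by simp [hcd]),
    ncard_inter_singleton]
  omega

lemma cnt_split3 (E : Set Edge) (l m u : ℤ) (h1 : l ≤ m + 1) (h2 : m ≤ u) :
    cnt E l m + cnt E (m+1) u = cnt E l u := by
  classical
  rw [cnt, cnt, cnt]
  rw [← Finset.card_union_of_disjoint (by
    apply Finset.disjoint_filter_filter
    rw [Finset.disjoint_left]; intro i hi hj; simp at hi hj; omega)]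
  rw [← Finset.filter_union]
  congr 2
  ext i; simp; omega

lemma cnt_prefix (E : Set Edge) (l u : ℤ) (h1 : 1 ≤ l) (h2 : l ≤ u + 1) :
    cnt E 1 (l-1) + cnt E l u = cnt E 1 u := by
  have h := cnt_split3 E 1 (l-1) u (by omega) (by omega)
  rw [show l - 1 + 1 = l by ring] at h
  exact h

lemma cnt_singleton (E : Set Edge) (y : ℤ) : cnt E y y = eX E (vedge 1 y) := by
  classical
  by_cases h : vedge 1 y ∈ E <;>
    simp [cnt, Finset.Icc_self, Finset.filter_singleton, h, eX]

lemma vertexRel (n : ℤ) (E : Set Edge) (hE1 : ∀ e ∈ E, gridEdge n n e)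
    (hdeg : ∀ p : V, Even (degree E p)) (x y : ℤ) :
    (eX E (hedge (x-1) y) + eX E (hedge x y) + eX E (vedge x (y-1)) + eX E (vedge x y)) % 2
      = 0 := by
  have hset : {e ∈ E | (x,y) ∈ e}
      = E ∩ {hedge (x-1) y, hedge x y, vedge x (y-1), vedge x y} := by
    ext e
    simp only [Set.mem_setOf_eq, Set.mem_inter_iff, Set.mem_insert_iff, Set.mem_singleton_iff]
    constructor
    · rintro ⟨he, hme⟩
      refine ⟨he, ?_⟩
      rcases gridEdge_iff.1 (hE1 e he) with ⟨a,b,rfl,hb⟩|⟨a,b,rfl,hb⟩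
      · rcases mem_hedge.1 hme with h|h
        · obtain ⟨rfl, rfl⟩ : a = x ∧ b = y := by
            rw [Prod.ext_iff] at h; exact ⟨h.1.symm, h.2.symm⟩
          tauto
        · rw [Prod.ext_iff] at h
          have h1 : a = x - 1 := by have := h.1; omega
          have h2 : b = y := h.2.symm
          subst h1; subst h2; tauto
      · rcases mem_vedge.1 hme with h|h
        · obtain ⟨rfl, rfl⟩ : a = x ∧ b = y := by
            rw [Prod.ext_iff] at h; exact ⟨h.1.symm, h.2.symm⟩
          tauto
        · rw [Prod.ext_iff] at h
          have h1 : a = x := h.1.symm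
          have h2 : b = y - 1 := by have := h.2; omega
          subst h1; subst h2; tauto
    · rintro ⟨he, (rfl|rfl|rfl|rfl)⟩ <;> refine ⟨he, ?_⟩
      · exact mem_hedge.2 (Or.inr (by rw [Prod.ext_iff]; constructor <;> simp))
      · exact mem_hedge.2 (Or.inl rfl)
      · exact mem_vedge.2 (Or.inr (by rw [Prod.ext_iff]; constructor <;> simp))
      · exact mem_vedge.2 (Or.inl rfl)
  have h4 := hdeg (x,y)
  rw [degree, hset, ncard_inter_four E _ _ _ _
      (by rw [Ne, hedge_inj]; intro h; omega) hedge_ne_vedge hedge_ne_vedge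
      hedge_ne_vedge hedge_ne_vedge (by rw [Ne, vedge_inj]; intro h; omega)] at h4
  rw [Nat.even_iff] at h4
  omega

lemma cellEdges_eq (a b : ℤ) :
    cellEdges a b = {hedge a b, vedge a b, vedge (a+1) b, hedge a (b+1)} := by
  rw [cellEdges, hedge, vedge, vedge, hedge]

lemma cellRel (n : ℤ) (E : Set Edge)
    (hcell : ∀ a b : ℤ, isCell n n a b → Even (cellCount E a b)) (a b : ℤ)
    (h1 : 1 ≤ a) (h2 : a + 1 ≤ n) (h3 : 1 ≤ b) (h4 : b + 1 ≤ n) :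
    (eX E (hedge a b) + eX E (vedge a b) + eX E (vedge (a+1) b) + eX E (hedge a (b+1))) % 2
      = 0 := by
  have h := hcell a b ⟨h1, h2, h3, h4⟩
  rw [cellCount, cellEdges_eq, ncard_inter_four E _ _ _ _
      hedge_ne_vedge hedge_ne_vedge (by rw [Ne, hedge_inj]; intro h; omega)
      (by rw [Ne, vedge_inj]; intro h; omega) (Ne.symm hedge_ne_vedge)
      (Ne.symm hedge_ne_vedge)] at h
  rw [Nat.even_iff] at h
  omega
lemma mainLemma (n : ℤ) (E : Set Edge) (hE : TotallyEven n n E) :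
    ∀ x : ℤ, 1 ≤ x → ∀ y : ℤ,
      (1 ≤ y → y + 1 ≤ n → x ≤ n →
        eX E (vedge x y) = cnt E (max (x-y) (y-x+1)) (min (x+y-1) (2*n-x-y)) % 2)
      ∧ (1 ≤ y → y ≤ n → x + 1 ≤ n →
        eX E (hedge x y) = cnt E (max (y-x) (x-y+1)) (min (x+y-1) (2*n-x-y)) % 2) := by
  obtain ⟨hE1, hdeg, hcell⟩ := hE
  have hv0 : ∀ x y : ℤ, ¬(1 ≤ x ∧ x ≤ n ∧ 1 ≤ y ∧ y + 1 ≤ n) → eX E (vedge x y) = 0 :=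
    fun x y h => eX_eq_zero_of (fun hm => h (vedge_grid_iff.1 (hE1 _ hm)))
  have hh0 : ∀ x y : ℤ, ¬(1 ≤ x ∧ x + 1 ≤ n ∧ 1 ≤ y ∧ y ≤ n) → eX E (hedge x y) = 0 :=
    fun x y h => eX_eq_zero_of (fun hm => h (hedge_grid_iff.1 (hE1 _ hm)))
  have hsing : ∀ y : ℤ, eX E (vedge 1 y) = cnt E y y % 2 := by
    intro y
    rw [cnt_singleton]
    have := eX_le_one E (vedge 1 y)
    omega
  refine Int.le_induction ?_ ?_
  · intro y
    constructor
    · intro hy1 hy2 _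
      rw [show max (1-y) (y-1+1) = y by omega, show min (1+y-1) (2*n-1-y) = y by omega]
      exact hsing y
    · intro hy1 hy2 hn2
      have hrel := vertexRel n E hE1 hdeg 1 y
      rw [show (1:ℤ)-1 = 0 by norm_num] at hrel
      have h0 : eX E (hedge 0 y) = 0 := hh0 0 y (by omega)
      rcases eq_or_ne y 1 with rfl | hy1'
      · rw [show max ((1:ℤ)-1) (1-1+1) = 1 by norm_num,
          show min ((1:ℤ)+1-1) (2*n-1-1) = 1 by omega]
        have hz : eX E (vedge 1 (1-1)) = 0 := hv0 1 (1-1) (by omega)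
        have h1 := hsing 1
        have := eX_le_one E (hedge 1 1)
        omega
      · rcases eq_or_ne y n with hyn | hyn
        · rw [show max (y-1) (1-y+1) = y-1 by omega,
            show min (1+y-1) (2*n-1-y) = y-1 by omega]
          have hz : eX E (vedge 1 y) = 0 := hv0 1 y (by omega)
          have h1 := hsing (y-1)
          have := eX_le_one E (hedge 1 y)
          omega
        · rw [show max (y-1) (1-y+1) = y-1 by omega,
            show min (1+y-1) (2*n-1-y) = y by omega]
          have h1 := hsing (y-1)
          have h2 := hsing y
          have hs := cnt_split3 E (y-1) (y-1) y (by omega) (by omega)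
          rw [show y-1+1 = y by ring] at hs
          have := eX_le_one E (hedge 1 y)
          omega
  · intro x hx IH y
    have hV : ∀ y : ℤ, 1 ≤ y → y + 1 ≤ n → x + 1 ≤ n →
        eX E (vedge (x+1) y) = cnt E (max (x+1-y) (y-(x+1)+1)) (min (x+1+y-1) (2*n-(x+1)-y)) % 2 := by
      intro y hy1 hy2 hx2
      have IH2 := (IH y).2 hy1 (by omega) hx2
      have IH3 := (IH y).1 hy1 hy2 (by omega)
      have IH4 := (IH (y+1)).2 (by omega) (by omega) hx2
      have hrel := cellRel n E hcell x y (by omega) hx2 hy1 hy2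
      -- canonical endpoints: a = max (y-x) (x-y+1), a' = max (x-y) (y-x+1),
      -- b = min (x+y) (2*n-x-y-1), b' = min (x+y-1) (2*n-x-y)
      rw [show max (x+1-y) (y-(x+1)+1) = max (y-x) (x-y+1) by omega,
        show min (x+1+y-1) (2*n-(x+1)-y) = min (x+y) (2*n-x-y-1) by omega]
      rw [show max (y+1-x) (x-(y+1)+1) = max (x-y) (y-x+1) by omega,
        show min (x+(y+1)-1) (2*n-x-(y+1)) = min (x+y) (2*n-x-y-1) by omega] at IH4
      have p1 := cnt_prefix E (max (y-x) (x-y+1)) (min (x+y) (2*n-x-y-1))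
        (by omega) (by omega)
      have p2 := cnt_prefix E (max (y-x) (x-y+1)) (min (x+y-1) (2*n-x-y))
        (by omega) (by omega)
      have p3 := cnt_prefix E (max (x-y) (y-x+1)) (min (x+y-1) (2*n-x-y))
        (by omega) (by omega)
      have p4 := cnt_prefix E (max (x-y) (y-x+1)) (min (x+y) (2*n-x-y-1))
        (by omega) (by omega)
      have b1 := eX_le_one E (vedge (x+1) y)
      have b2 := eX_le_one E (hedge x y)
      have b3 := eX_le_one E (vedge x y)
      have b4 := eX_le_one E (hedge x (y+1))
      omega
    refine ⟨fun hy1 hy2 hx2 => hV y hy1 hy2 (by omega), fun hy1 hy2 hx2 => ?_⟩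
    have hrel := vertexRel n E hE1 hdeg (x+1) y
    rw [add_sub_cancel_right] at hrel
    have IH2 := (IH y).2 hy1 hy2 (by omega)
    rcases eq_or_ne y 1 with rfl | hy1'
    · have hz : eX E (vedge (x+1) (1-1)) = 0 := hv0 (x+1) (1-1) (by omega)
      have hv1 := hV 1 (by omega) (by omega) (by omega)
      rw [show max ((1:ℤ)-x) (x-1+1) = x by omega,
        show min (x+1-1) (2*n-x-1) = x by omega] at IH2
      rw [show max (x+1-1) (1-(x+1)+1) = x by omega,
        show min (x+1+1-1) (2*n-(x+1)-1) = x+1 by omega] at hv1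
      rw [show max (1-(x+1)) ((x+1)-1+1) = x+1 by omega,
        show min ((x+1)+1-1) (2*n-(x+1)-1) = x+1 by omega]
      have hs := cnt_split3 E x x (x+1) (by omega) (by omega)
      have b1 := eX_le_one E (hedge (x+1) 1)
      omega
    · rcases eq_or_ne y n with hyn | hyn
      · have hz : eX E (vedge (x+1) y) = 0 := hv0 (x+1) y (by omega)
        have hv1 := hV (y-1) (by omega) (by omega) (by omega)
        rw [show max (y-x) (x-y+1) = y-x by omega,
          show min (x+y-1) (2*n-x-y) = y-x by omega] at IH2
        rw [show max (x+1-(y-1)) ((y-1)-(x+1)+1) = y-x-1 by omega,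
          show min (x+1+(y-1)-1) (2*n-(x+1)-(y-1)) = y-x by omega] at hv1
        rw [show max (y-(x+1)) ((x+1)-y+1) = y-x-1 by omega,
          show min ((x+1)+y-1) (2*n-(x+1)-y) = y-x-1 by omega]
        have hs := cnt_split3 E (y-x-1) (y-x-1) (y-x) (by omega) (by omega)
        rw [show y-x-1+1 = y-x by ring] at hs
        have b1 := eX_le_one E (hedge (x+1) y)
        omega
      · -- interior: 2 ≤ y ≤ n-1
        have hv1 := hV (y-1) (by omega) (by omega) (by omega)
        have hv2 := hV y (by omega) (by omega) (by omega)
        -- canonical: α = max (y-x-1) (x-y+2), a = max (y-x) (x-y+1),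
        -- β = min (x+y) (2*n-x-y-1), b' = min (x+y-1) (2*n-x-y)
        rw [show max (x+1-(y-1)) ((y-1)-(x+1)+1) = max (y-x-1) (x-y+2) by omega,
          show min (x+1+(y-1)-1) (2*n-(x+1)-(y-1)) = min (x+y-1) (2*n-x-y) by omega] at hv1
        rw [show max (x+1-y) (y-(x+1)+1) = max (y-x) (x-y+1) by omega,
          show min (x+1+y-1) (2*n-(x+1)-y) = min (x+y) (2*n-x-y-1) by omega] at hv2
        rw [show max (y-(x+1)) ((x+1)-y+1) = max (y-x-1) (x-y+2) by omega,
          show min ((x+1)+y-1) (2*n-(x+1)-y) = min (x+y) (2*n-x-y-1) by omega]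
        have p1 := cnt_prefix E (max (y-x-1) (x-y+2)) (min (x+y) (2*n-x-y-1))
          (by omega) (by omega)
        have p2 := cnt_prefix E (max (y-x-1) (x-y+2)) (min (x+y-1) (2*n-x-y))
          (by omega) (by omega)
        have p3 := cnt_prefix E (max (y-x) (x-y+1)) (min (x+y-1) (2*n-x-y))
          (by omega) (by omega)
        have p4 := cnt_prefix E (max (y-x) (x-y+1)) (min (x+y) (2*n-x-y-1))
          (by omega) (by omega)
        have b1 := eX_le_one E (hedge (x+1) y)
        omega
theorem stmt2 (n : ℤ) (hn : 1 ≤ n) (E : Set Edge) (hE : TotallyEven n n E) :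
    ∃! S : Finset ℤ, ↑S ⊆ Set.Icc (1 : ℤ) (n - 1) ∧
      E = {e : Edge | Odd ({i : ℤ | i ∈ S ∧ e ∈ diamondSet n i}.ncard)} := by
  classical
  have hE1 := hE.1
  have hset : ∀ (S : Finset ℤ) (e : Edge),
      {i : ℤ | i ∈ S ∧ e ∈ diamondSet n i}.ncard
        = (S.filter (fun i => e ∈ diamondSet n i)).card := by
    intro S e
    rw [show {i : ℤ | i ∈ S ∧ e ∈ diamondSet n i}
        = ↑(S.filter (fun i => e ∈ diamondSet n i)) by ext i; simp]
    exact Set.ncard_coe_finset _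
  refine ⟨(Finset.Icc 1 (n-1)).filter (fun i => vedge 1 i ∈ E), ⟨?_, ?_⟩, ?_⟩
  · intro i hi
    rw [Finset.mem_coe, Finset.mem_filter, Finset.mem_Icc] at hi
    exact Set.mem_Icc.2 ⟨hi.1.1, hi.1.2⟩
  · ext e
    simp only [Set.mem_setOf_eq]
    rw [hset]
    by_cases hg : gridEdge n n e
    · rcases gridEdge_iff.1 hg with ⟨x,y,rfl,hb1,hb2,hb3,hb4⟩|⟨x,y,rfl,hb1,hb2,hb3,hb4⟩
      · have hfil : ((Finset.Icc 1 (n-1)).filter (fun i => vedge 1 i ∈ E)).filter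
            (fun i => hedge x y ∈ diamondSet n i)
            = (Finset.Icc (max (y-x) (x-y+1)) (min (x+y-1) (2*n-x-y))).filter
              (fun i => vedge 1 i ∈ E) := by
          ext i
          simp only [Finset.mem_filter, Finset.mem_Icc, hedge_mem_diamondSet]
          constructor
          · rintro ⟨⟨-, h⟩, -, h4, h5⟩; exact ⟨⟨h4, h5⟩, h⟩
          · rintro ⟨⟨h4, h5⟩, h⟩
            exact ⟨⟨⟨by omega, by omega⟩, h⟩, ⟨hb1,hb2,hb3,hb4⟩, h4, h5⟩
        rw [hfil]
        have hm := (mainLemma n E hE x hb1 y).2 hb3 hb4 hb2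
        rw [show ((Finset.Icc (max (y-x) (x-y+1)) (min (x+y-1) (2*n-x-y))).filter
            (fun i => vedge 1 i ∈ E)).card = cnt E (max (y-x) (x-y+1)) (min (x+y-1) (2*n-x-y))
          from rfl]
        rw [Nat.odd_iff, ← hm]
        exact eX_eq_one_iff.symm
      · have hfil : ((Finset.Icc 1 (n-1)).filter (fun i => vedge 1 i ∈ E)).filter
            (fun i => vedge x y ∈ diamondSet n i)
            = (Finset.Icc (max (x-y) (y-x+1)) (min (x+y-1) (2*n-x-y))).filter
              (fun i => vedge 1 i ∈ E) := by
          ext i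
          simp only [Finset.mem_filter, Finset.mem_Icc, vedge_mem_diamondSet]
          constructor
          · rintro ⟨⟨-, h⟩, -, h4, h5⟩; exact ⟨⟨h4, h5⟩, h⟩
          · rintro ⟨⟨h4, h5⟩, h⟩
            exact ⟨⟨⟨by omega, by omega⟩, h⟩, ⟨hb1,hb2,hb3,hb4⟩, h4, h5⟩
        rw [hfil]
        have hm := (mainLemma n E hE x hb1 y).1 hb3 hb4 hb2
        rw [show ((Finset.Icc (max (x-y) (y-x+1)) (min (x+y-1) (2*n-x-y))).filter
            (fun i => vedge 1 i ∈ E)).card = cnt E (max (x-y) (y-x+1)) (min (x+y-1) (2*n-x-y))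
          from rfl]
        rw [Nat.odd_iff, ← hm]
        exact eX_eq_one_iff.symm
    · constructor
      · intro hmem; exact absurd (hE1 e hmem) hg
      · intro hodd
        exfalso
        rw [Finset.filter_false_of_mem (fun i _ hd => hg hd.1)] at hodd
        simp at hodd
  · rintro S ⟨hSsub, hSeq⟩
    ext i
    rw [Finset.mem_filter, Finset.mem_Icc]
    by_cases hi : 1 ≤ i ∧ i ≤ n - 1
    · have hkey : vedge 1 i ∈ E ↔ i ∈ S := by
        rw [hSeq]
        simp only [Set.mem_setOf_eq]
        rw [hset S (vedge 1 i)]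
        rw [show S.filter (fun j => vedge 1 i ∈ diamondSet n j) = S.filter (fun j => j = i) by
          apply Finset.filter_congr
          intro j _
          simp only [vedge_mem_diamondSet, eq_iff_iff]
          constructor
          · rintro ⟨-, h1, h2⟩
            simp only [le_min_iff, max_le_iff] at h1 h2
            omega
          · rintro rfl
            refine ⟨⟨by omega, by omega, by omega, by omega⟩, ?_, ?_⟩ <;>
              simp only [le_min_iff, max_le_iff] <;> omega]
        rw [Finset.filter_eq']
        by_cases hiS : i ∈ S <;> simp [hiS]
      constructor
      · intro hiS
        exact ⟨⟨hi.1, hi.2⟩, hkey.2 hiS⟩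
      · rintro ⟨-, hv⟩
        exact hkey.1 hv
    · constructor
      · intro hiS
        have := hSsub hiS
        rw [Set.mem_Icc] at this
        exact absurd this hi
      · rintro ⟨h, -⟩
        exact absurd h hi

end Slitherlink
end

section
/- Let C₁ and C₂ be two cycles in the m × n grid graph with the same signature. Then C₁ and C₂ have the same length (the same number of edges). -/
namespace Slitherlink

-- === auxiliary ===
def hE (a y : ℤ) : Edge := s(((a:ℤ), y), (a + 1, y))
def vE (x b : ℤ) : Edge := s(((x:ℤ), b), (x, b + 1))

lemma hE_eq_hE {a y a' y' : ℤ} : hE a y = hE a' y' ↔ a = a' ∧ y = y' := by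
  constructor
  · intro h
    rw [hE, hE, Sym2.eq_iff] at h
    rcases h with ⟨h1, h2⟩ | ⟨h1, h2⟩ <;> rw [Prod.ext_iff] at h1 h2 <;>
      simp only at h1 h2 <;> omega
  · rintro ⟨rfl, rfl⟩; rfl

lemma vE_eq_vE {x b x' b' : ℤ} : vE x b = vE x' b' ↔ x = x' ∧ b = b' := by
  constructor
  · intro h
    rw [vE, vE, Sym2.eq_iff] at h
    rcases h with ⟨h1, h2⟩ | ⟨h1, h2⟩ <;> rw [Prod.ext_iff] at h1 h2 <;>
      simp only at h1 h2 <;> omega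
  · rintro ⟨rfl, rfl⟩; rfl

lemma hE_ne_vE (a y x b : ℤ) : hE a y ≠ vE x b := by
  intro h
  rw [hE, vE, Sym2.eq_iff] at h
  rcases h with ⟨h1, h2⟩ | ⟨h1, h2⟩ <;> rw [Prod.ext_iff] at h1 h2 <;>
    simp only at h1 h2 <;> omega

lemma gridEdge_cases {m n : ℤ} {e : Edge} (h : gridEdge m n e) :
    (∃ a y, e = hE a y ∧ 1 ≤ a ∧ a + 1 ≤ m ∧ 1 ≤ y ∧ y ≤ n) ∨
    (∃ x b, e = vE x b ∧ 1 ≤ x ∧ x ≤ m ∧ 1 ≤ b ∧ b + 1 ≤ n) := by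
  obtain ⟨⟨px, py⟩, ⟨qx, qy⟩, rfl, hp, hq, hor | hver⟩ := h
  · obtain ⟨h1, h2⟩ := hor
    simp only at h1 h2
    obtain ⟨a1, a2, a3, a4⟩ := hp; obtain ⟨b1, b2, b3, b4⟩ := hq
    simp only at a1 a2 a3 a4 b1 b2 b3 b4
    refine Or.inl ⟨px, py, ?_, by omega, by omega, by omega, by omega⟩
    rw [hE, Sym2.eq_iff]
    left
    exact ⟨rfl, by rw [Prod.ext_iff]; exact ⟨h1, h2⟩⟩
  · obtain ⟨h1, h2⟩ := hver
    simp only at h1 h2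
    obtain ⟨a1, a2, a3, a4⟩ := hp; obtain ⟨b1, b2, b3, b4⟩ := hq
    simp only at a1 a2 a3 a4 b1 b2 b3 b4
    refine Or.inr ⟨px, py, ?_, by omega, by omega, by omega, by omega⟩
    rw [vE, Sym2.eq_iff]
    left
    exact ⟨rfl, by rw [Prod.ext_iff]; exact ⟨h1, h2⟩⟩

lemma gridEdge_finite (m n : ℤ) : {e : Edge | gridEdge m n e}.Finite := by
  have hsub : {e : Edge | gridEdge m n e} ⊆
      (fun pq : V × V => s(pq.1, pq.2)) ''
        (Set.Icc ((1 : ℤ), (1 : ℤ)) (m, n) ×ˢ Set.Icc ((1 : ℤ), (1 : ℤ)) (m, n)) := by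
    rintro e ⟨p, q, rfl, hp, hq, -⟩
    refine ⟨(p, q), ⟨?_, ?_⟩, rfl⟩
    · exact ⟨⟨hp.1, hp.2.2.1⟩, ⟨hp.2.1, hp.2.2.2⟩⟩
    · exact ⟨⟨hq.1, hq.2.2.1⟩, ⟨hq.2.1, hq.2.2.2⟩⟩
  exact (((Set.finite_Icc _ _).prod (Set.finite_Icc _ _)).image _).subset hsub


open Classical in
noncomputable def ihN (T : Set Edge) (a y : ℤ) : ℕ := if hE a y ∈ T then 1 else 0
open Classical in
noncomputable def ivN (T : Set Edge) (x b : ℤ) : ℕ := if vE x b ∈ T then 1 else 0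

noncomputable def Ssh (T : Set Edge) (a b : ℤ) : ZMod 2 :=
  ∑ y ∈ Finset.Icc 1 b, ((ihN T a y : ZMod 2))

section TE
variable {m n : ℤ} {T : Set Edge}

lemma hE_mem_bounds (hgrid : ∀ e ∈ T, gridEdge m n e) {a y : ℤ} (h : hE a y ∈ T) :
    1 ≤ a ∧ a + 1 ≤ m ∧ 1 ≤ y ∧ y ≤ n := by
  rcases gridEdge_cases (hgrid _ h) with ⟨a', y', he, hb⟩ | ⟨x, b, he, hb⟩
  · obtain ⟨rfl, rfl⟩ := hE_eq_hE.mp he; exact hb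
  · exact absurd he (hE_ne_vE _ _ _ _)

lemma vE_mem_bounds (hgrid : ∀ e ∈ T, gridEdge m n e) {x b : ℤ} (h : vE x b ∈ T) :
    1 ≤ x ∧ x ≤ m ∧ 1 ≤ b ∧ b + 1 ≤ n := by
  rcases gridEdge_cases (hgrid _ h) with ⟨a', y', he, hb⟩ | ⟨x', b', he, hb⟩
  · exact absurd he.symm (hE_ne_vE _ _ _ _)
  · obtain ⟨rfl, rfl⟩ := vE_eq_vE.mp he; exact hb

open Classical in
lemma ncard_inter_insert (T : Set Edge) {x : Edge} {s : Set Edge} (hx : x ∉ s) (hs : s.Finite) :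
    (T ∩ insert x s).ncard = (if x ∈ T then 1 else 0) + (T ∩ s).ncard := by
  by_cases hxT : x ∈ T
  · have he : T ∩ insert x s = insert x (T ∩ s) := by
      ext e; simp only [Set.mem_inter_iff, Set.mem_insert_iff]
      constructor
      · rintro ⟨h1, rfl | h2⟩
        · exact Or.inl rfl
        · exact Or.inr ⟨h1, h2⟩
      · rintro (rfl | ⟨h1, h2⟩)
        · exact ⟨hxT, Or.inl rfl⟩
        · exact ⟨h1, Or.inr h2⟩
    rw [he, if_pos hxT, Set.ncard_insert_of_notMem (fun hc => hx hc.2) (hs.inter_of_right T)]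
    omega
  · have he : T ∩ insert x s = T ∩ s := by
      ext e; simp only [Set.mem_inter_iff, Set.mem_insert_iff]
      constructor
      · rintro ⟨h1, rfl | h2⟩
        · exact absurd h1 hxT
        · exact ⟨h1, h2⟩
      · rintro ⟨h1, h2⟩
        exact ⟨h1, Or.inr h2⟩
    rw [he, if_neg hxT, zero_add]

open Classical in
lemma ncard_inter_singleton_s7 (T : Set Edge) (x : Edge) :
    (T ∩ {x}).ncard = if x ∈ T then 1 else 0 := by
  by_cases hxT : x ∈ T
  · have : T ∩ {x} = {x} := by
      ext e; simp only [Set.mem_inter_iff, Set.mem_singleton_iff]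
      exact ⟨fun h => h.2, fun h => ⟨h ▸ hxT, h⟩⟩
    rw [this, if_pos hxT, Set.ncard_singleton]
  · have : T ∩ {x} = ∅ := by
      ext e; simp only [Set.mem_inter_iff, Set.mem_singleton_iff, Set.mem_empty_iff_false]
      exact iff_false_intro (fun h => hxT (h.2 ▸ h.1))
    rw [this, if_neg hxT, Set.ncard_empty]

lemma F1 (hgrid : ∀ e ∈ T, gridEdge m n e) (heven : ∀ p : V, Even (degree T p)) (x y : ℤ) :
    ((ihN T (x-1) y : ZMod 2) + (ihN T x y : ZMod 2)) +
      ((ivN T x y : ZMod 2) + (ivN T x (y-1) : ZMod 2)) = 0 := by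
  classical
  have hset : {e ∈ T | (x, y) ∈ e} =
      T ∩ insert (hE (x-1) y) (insert (hE x y) (insert (vE x y) ({vE x (y-1)} : Set Edge))) := by
    ext e
    simp only [Set.mem_setOf_eq, Set.mem_inter_iff, Set.mem_insert_iff, Set.mem_singleton_iff]
    constructor
    · rintro ⟨heT, hpe⟩
      refine ⟨heT, ?_⟩
      rcases gridEdge_cases (hgrid e heT) with ⟨a, y', rfl, hb⟩ | ⟨a, b, rfl, hb⟩
      · rw [hE, Sym2.mem_iff] at hpe
        rcases hpe with h | h <;> rw [Prod.ext_iff] at h <;> simp only at h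
        · obtain ⟨h1, h2⟩ := h
          right; left; rw [hE_eq_hE]; omega
        · obtain ⟨h1, h2⟩ := h
          left; rw [hE_eq_hE]; omega
      · rw [vE, Sym2.mem_iff] at hpe
        rcases hpe with h | h <;> rw [Prod.ext_iff] at h <;> simp only at h
        · obtain ⟨h1, h2⟩ := h
          right; right; left; rw [vE_eq_vE]; omega
        · obtain ⟨h1, h2⟩ := h
          right; right; right; rw [vE_eq_vE]; omega
    · rintro ⟨heT, rfl | rfl | rfl | rfl⟩ <;> refine ⟨heT, ?_⟩ <;>
        simp only [hE, vE, Sym2.mem_iff, Prod.mk.injEq, and_true, true_and] <;>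
        first
        | exact Or.inl trivial
        | omega
  have hd12 : hE (x-1) y ≠ hE x y := fun hc => by have := hE_eq_hE.mp hc; omega
  have hd13 : hE (x-1) y ≠ vE x y := hE_ne_vE _ _ _ _
  have hd14 : hE (x-1) y ≠ vE x (y-1) := hE_ne_vE _ _ _ _
  have hd23 : hE x y ≠ vE x y := hE_ne_vE _ _ _ _
  have hd24 : hE x y ≠ vE x (y-1) := hE_ne_vE _ _ _ _
  have hd34 : vE x y ≠ vE x (y-1) := fun hc => by have := vE_eq_vE.mp hc; omega
  have hcard : degree T (x, y) = ihN T (x-1) y + (ihN T x y + (ivN T x y + ivN T x (y-1))) := by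
    rw [degree, hset]
    rw [ncard_inter_insert T (by simp only [Set.mem_insert_iff, Set.mem_singleton_iff]; tauto)
        ((Set.finite_singleton _).insert _ |>.insert _)]
    rw [ncard_inter_insert T (by simp only [Set.mem_insert_iff, Set.mem_singleton_iff]; tauto)
        ((Set.finite_singleton _).insert _)]
    rw [ncard_inter_insert T (by simp only [Set.mem_singleton_iff]; tauto)
        (Set.finite_singleton _)]
    rw [ncard_inter_singleton_s7]
    rfl
  have hev : Even (ihN T (x-1) y + (ihN T x y + (ivN T x y + ivN T x (y-1)))) := by
    rw [← hcard]; exact heven (x, y)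
  have : (((ihN T (x-1) y + (ihN T x y + (ivN T x y + ivN T x (y-1)))) : ℕ) : ZMod 2) = 0 := by
    rw [ZMod.natCast_eq_zero_iff]
    exact even_iff_two_dvd.mp hev
  push_cast at this
  linear_combination this


lemma ihN_cast_eq_zero (hgrid : ∀ e ∈ T, gridEdge m n e) {a y : ℤ}
    (h : ¬(1 ≤ a ∧ a + 1 ≤ m ∧ 1 ≤ y ∧ y ≤ n)) : ihN T a y = 0 := by
  rw [ihN, if_neg (fun hm => h (hE_mem_bounds hgrid hm))]

lemma ivN_cast_eq_zero (hgrid : ∀ e ∈ T, gridEdge m n e) {x b : ℤ}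
    (h : ¬(1 ≤ x ∧ x ≤ m ∧ 1 ≤ b ∧ b + 1 ≤ n)) : ivN T x b = 0 := by
  rw [ivN, if_neg (fun hm => h (vE_mem_bounds hgrid hm))]

lemma tele (f : ℤ → ZMod 2) {b : ℤ} (hb : 0 ≤ b) :
    ∑ y ∈ Finset.Icc 1 b, (f y + f (y - 1)) = f b + f 0 := by
  refine Int.le_induction (motive := fun b _ => ∑ y ∈ Finset.Icc 1 b, (f y + f (y - 1)) = f b + f 0) ?_ ?_ b hb
  · show ∑ y ∈ Finset.Icc (1:ℤ) 0, (f y + f (y - 1)) = f 0 + f 0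
    rw [Finset.Icc_eq_empty (by omega), Finset.sum_empty]
    exact (CharTwo.add_self_eq_zero (f 0)).symm
  · intro b hb ih
    have hins : Finset.Icc (1 : ℤ) (b + 1) = insert (b + 1) (Finset.Icc 1 b) := by
      ext z; simp only [Finset.mem_Icc, Finset.mem_insert]; omega
    rw [hins, Finset.sum_insert (by simp only [Finset.mem_Icc]; omega), ih]
    have h1 : b + 1 - 1 = b := by ring
    rw [h1]
    have h2 := CharTwo.add_self_eq_zero (f b)
    linear_combination h2

lemma lemB (hgrid : ∀ e ∈ T, gridEdge m n e) (heven : ∀ p : V, Even (degree T p))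
    {b : ℤ} (hb : 0 ≤ b) (x : ℤ) :
    Ssh T (x - 1) b + Ssh T x b = (ivN T x b : ZMod 2) := by
  have hsum : ∑ y ∈ Finset.Icc 1 b,
      (((ihN T (x-1) y : ZMod 2) + (ihN T x y : ZMod 2)) +
        ((ivN T x y : ZMod 2) + (ivN T x (y-1) : ZMod 2))) = 0 :=
    Finset.sum_eq_zero (fun y _ => F1 hgrid heven x y)
  rw [Finset.sum_add_distrib, Finset.sum_add_distrib,
    tele (fun y => (ivN T x y : ZMod 2)) hb] at hsum
  have h0 : (ivN T x 0 : ZMod 2) = 0 := by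
    rw [ivN_cast_eq_zero hgrid (by omega)]; norm_num
  rw [h0, add_zero] at hsum
  rw [Ssh, Ssh]
  linear_combination hsum - CharTwo.add_self_eq_zero ((ivN T x b : ZMod 2))

lemma lemA (hgrid : ∀ e ∈ T, gridEdge m n e) (heven : ∀ p : V, Even (degree T p))
    (a : ℤ) : Ssh T a n = 0 := by
  rcases lt_or_ge n 0 with hn | hn
  · rw [Ssh, Finset.Icc_eq_empty (by omega), Finset.sum_empty]
  · have hbase : ∀ a : ℤ, a ≤ 0 → Ssh T a n = 0 := by
      intro a ha
      rw [Ssh]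
      refine Finset.sum_eq_zero (fun y _ => ?_)
      rw [ihN_cast_eq_zero hgrid (by omega)]; norm_num
    have hstep : ∀ x : ℤ, Ssh T (x - 1) n = Ssh T x n := by
      intro x
      have hB := lemB hgrid heven hn x
      have hv : (ivN T x n : ZMod 2) = 0 := by
        rw [ivN_cast_eq_zero hgrid (by omega)]; norm_num
      rw [hv] at hB
      linear_combination hB - CharTwo.add_self_eq_zero (Ssh T x n)
    have hpos : ∀ a : ℤ, 0 ≤ a → Ssh T a n = 0 := by
      intro a ha
      refine Int.le_induction (motive := fun a _ => Ssh T a n = 0) ?_ ?_ a ha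
      · show Ssh T 0 n = 0
        exact hbase 0 le_rfl
      · intro b hb ih
        show Ssh T (b + 1) n = 0
        change Ssh T b n = 0 at ih
        have := hstep (b + 1)
        have hsimp : b + 1 - 1 = b := by ring
        rw [hsimp] at this
        rw [← this, ih]
    rcases le_total a 0 with ha | ha
    · exact hbase a ha
    · exact hpos a ha

lemma Ssh_isCell (hgrid : ∀ e ∈ T, gridEdge m n e) (heven : ∀ p : V, Even (degree T p))
    {a b : ℤ} (h : Ssh T a b = 1) : isCell m n a b := by
  have hne : Ssh T a b ≠ 0 := by rw [h]; decide
  have hex : ∃ y ∈ Finset.Icc (1:ℤ) b, ihN T a y ≠ 0 := by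
    by_contra hc
    push_neg at hc
    exact hne (Finset.sum_eq_zero (fun y hy => by rw [hc y hy]; norm_num))
  obtain ⟨y, hy, hne2⟩ := hex
  rw [Finset.mem_Icc] at hy
  have hmem : hE a y ∈ T := by
    by_contra hc
    exact hne2 (by rw [ihN, if_neg hc])
  obtain ⟨b1, b2, b3, b4⟩ := hE_mem_bounds hgrid hmem
  refine ⟨b1, b2, by omega, ?_⟩
  by_contra hc
  push_neg at hc
  have hbn : n ≤ b := by omega
  have hsplit : Finset.Icc (1:ℤ) b = Finset.Icc 1 n ∪ Finset.Ioc n b := by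
    ext z; simp only [Finset.mem_Icc, Finset.mem_union, Finset.mem_Ioc]; omega
  have hdisj : Disjoint (Finset.Icc (1:ℤ) n) (Finset.Ioc n b) := by
    rw [Finset.disjoint_left]
    intro z hz1 hz2
    rw [Finset.mem_Icc] at hz1; rw [Finset.mem_Ioc] at hz2; omega
  have : Ssh T a b = Ssh T a n + ∑ y ∈ Finset.Ioc n b, ((ihN T a y : ZMod 2)) := by
    rw [Ssh, hsplit, Finset.sum_union hdisj, Ssh]
  rw [this, lemA hgrid heven, zero_add] at h
  have : ∑ y ∈ Finset.Ioc n b, ((ihN T a y : ZMod 2)) = 0 := by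
    refine Finset.sum_eq_zero (fun z hz => ?_)
    rw [Finset.mem_Ioc] at hz
    rw [ihN_cast_eq_zero hgrid (by omega)]; norm_num
  rw [this] at h
  exact absurd h.symm (by decide)


lemma zmod2_cases (x : ZMod 2) : x = 0 ∨ x = 1 := by
  revert x; decide

lemma hE_mem_cellEdges {a y p q : ℤ} :
    hE a y ∈ cellEdges p q ↔ p = a ∧ (q = y ∨ q + 1 = y) := by
  simp only [cellEdges, Set.mem_insert_iff, Set.mem_singleton_iff, hE, Sym2.eq_iff,
    Prod.mk.injEq, and_true, true_and]
  omega

lemma vE_mem_cellEdges {x b p q : ℤ} :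
    vE x b ∈ cellEdges p q ↔ q = b ∧ (p = x ∨ p + 1 = x) := by
  simp only [cellEdges, Set.mem_insert_iff, Set.mem_singleton_iff, vE, Sym2.eq_iff,
    Prod.mk.injEq, and_true, true_and]
  omega

lemma own (hgrid : ∀ e ∈ T, gridEdge m n e) (heven : ∀ p : V, Even (degree T p))
    {e : Edge} (he : e ∈ T) :
    ∃! c : ℤ × ℤ, Ssh T c.1 c.2 = 1 ∧ e ∈ cellEdges c.1 c.2 := by
  rcases gridEdge_cases (hgrid e he) with ⟨a, y, rfl, b1, b2, b3, b4⟩ |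
    ⟨x, b, rfl, b1, b2, b3, b4⟩
  · have hins : Finset.Icc (1 : ℤ) y = insert y (Finset.Icc 1 (y - 1)) := by
      ext z; simp only [Finset.mem_Icc, Finset.mem_insert]; omega
    have hstep : Ssh T a y = (ihN T a y : ZMod 2) + Ssh T a (y - 1) := by
      rw [Ssh, hins, Finset.sum_insert (by simp only [Finset.mem_Icc]; omega), Ssh]
    have hih : (ihN T a y : ZMod 2) = 1 := by rw [ihN, if_pos he]; norm_num
    rcases zmod2_cases (Ssh T a (y - 1)) with h0 | h1
    · have hS : Ssh T a y = 1 := by rw [hstep, h0, hih, add_zero]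
      refine ⟨(a, y), ⟨hS, hE_mem_cellEdges.mpr ⟨rfl, Or.inl rfl⟩⟩, ?_⟩
      intro c ⟨hSpq, hmem⟩
      obtain ⟨h1', h2'⟩ := hE_mem_cellEdges.mp hmem
      rw [h1'] at hSpq
      rcases h2' with h2' | h2'
      · exact Prod.ext_iff.mpr ⟨h1', h2'⟩
      · exfalso
        have hq : c.2 = y - 1 := by omega
        rw [hq, h0] at hSpq
        exact absurd hSpq (by decide)
    · have hS : Ssh T a y = 0 := by rw [hstep, h1, hih]; decide
      refine ⟨(a, y - 1), ⟨h1, hE_mem_cellEdges.mpr ⟨rfl, Or.inr (by ring)⟩⟩, ?_⟩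
      intro c ⟨hSpq, hmem⟩
      obtain ⟨h1', h2'⟩ := hE_mem_cellEdges.mp hmem
      rw [h1'] at hSpq
      rcases h2' with h2' | h2'
      · exfalso
        rw [h2', hS] at hSpq
        exact absurd hSpq (by decide)
      · exact Prod.ext_iff.mpr ⟨h1', by omega⟩
  · have hB := lemB hgrid heven (by omega : (0 : ℤ) ≤ b) x
    have hiv : (ivN T x b : ZMod 2) = 1 := by rw [ivN, if_pos he]; norm_num
    rw [hiv] at hB
    rcases zmod2_cases (Ssh T (x - 1) b) with h0 | h1
    · have hS : Ssh T x b = 1 := by rw [h0, zero_add] at hB; exact hB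
      refine ⟨(x, b), ⟨hS, vE_mem_cellEdges.mpr ⟨rfl, Or.inl rfl⟩⟩, ?_⟩
      intro c ⟨hSpq, hmem⟩
      obtain ⟨h1', h2'⟩ := vE_mem_cellEdges.mp hmem
      rw [h1'] at hSpq
      rcases h2' with h2' | h2'
      · exact Prod.ext_iff.mpr ⟨h2', h1'⟩
      · exfalso
        have hp : c.1 = x - 1 := by omega
        rw [hp, h0] at hSpq
        exact absurd hSpq (by decide)
    · have hS : Ssh T x b = 0 := by linear_combination hB - h1
      refine ⟨(x - 1, b), ⟨h1, vE_mem_cellEdges.mpr ⟨rfl, Or.inr (by ring)⟩⟩, ?_⟩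
      intro c ⟨hSpq, hmem⟩
      obtain ⟨h1', h2'⟩ := vE_mem_cellEdges.mp hmem
      rw [h1'] at hSpq
      rcases h2' with h2' | h2'
      · exfalso
        rw [h2', hS] at hSpq
        exact absurd hSpq (by decide)
      · exact Prod.ext_iff.mpr ⟨by omega, h1'⟩

open Classical in
lemma count_by_cells (hgrid : ∀ e ∈ T, gridEdge m n e) (heven : ∀ p : V, Even (degree T p))
    {X : Set Edge} (hX : X ⊆ T) (hXfin : X.Finite)
    {SF : Finset (ℤ × ℤ)} (hSF : ∀ c : ℤ × ℤ, c ∈ SF ↔ Ssh T c.1 c.2 = 1) :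
    X.ncard = ∑ c ∈ SF, (X ∩ cellEdges c.1 c.2).ncard := by
  classical
  have hmemXF : ∀ e, e ∈ hXfin.toFinset ↔ e ∈ X := fun e => Set.Finite.mem_toFinset hXfin
  have hbi : hXfin.toFinset =
      SF.biUnion (fun c => hXfin.toFinset.filter (fun e => e ∈ cellEdges c.1 c.2)) := by
    ext e
    simp only [Finset.mem_biUnion, Finset.mem_filter]
    constructor
    · intro heX
      obtain ⟨c, ⟨hc1, hc2⟩, -⟩ := own hgrid heven (hX ((hmemXF e).mp heX))
      exact ⟨c, (hSF c).mpr hc1, heX, hc2⟩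
    · rintro ⟨c, -, h, -⟩; exact h
  have hdisj : ∀ c ∈ SF, ∀ c' ∈ SF, c ≠ c' →
      Disjoint (hXfin.toFinset.filter (fun e => e ∈ cellEdges c.1 c.2))
        (hXfin.toFinset.filter (fun e => e ∈ cellEdges c'.1 c'.2)) := by
    intro c hc c' hc' hne
    rw [Finset.disjoint_left]
    intro e he1 he2
    rw [Finset.mem_filter] at he1 he2
    obtain ⟨cu, -, huniq⟩ := own hgrid heven (hX ((hmemXF e).mp he1.1))
    exact hne ((huniq c ⟨(hSF c).mp hc, he1.2⟩).trans (huniq c' ⟨(hSF c').mp hc', he2.2⟩).symm)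
  rw [Set.ncard_eq_toFinset_card _ hXfin, hbi, Finset.card_biUnion hdisj]
  refine Finset.sum_congr rfl (fun c hc => ?_)
  have hset : X ∩ cellEdges c.1 c.2 =
      ↑(hXfin.toFinset.filter (fun e => e ∈ cellEdges c.1 c.2)) := by
    ext e
    simp only [Set.mem_inter_iff, Finset.coe_filter, Set.mem_setOf_eq, hmemXF]
  rw [hset, Set.ncard_coe_finset]

end TE

lemma degree_symmDiff_even {C₁ C₂ : Set Edge} (h1 : C₁.Finite) (h2 : C₂.Finite)
    (e1 : ∀ p : V, Even (degree C₁ p)) (e2 : ∀ p : V, Even (degree C₂ p)) (p : V) :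
    Even (degree ((C₁ \ C₂) ∪ (C₂ \ C₁)) p) := by
  set d1 : Set Edge := {e ∈ C₁ | p ∈ e} with hd1
  set d2 : Set Edge := {e ∈ C₂ | p ∈ e} with hd2
  have hf1 : d1.Finite := h1.subset (fun e he => he.1)
  have hf2 : d2.Finite := h2.subset (fun e he => he.1)
  have hD : {e ∈ (C₁ \ C₂) ∪ (C₂ \ C₁) | p ∈ e} = (d1 \ d2) ∪ (d2 \ d1) := by
    ext e
    simp only [hd1, hd2, Set.mem_setOf_eq, Set.mem_union, Set.mem_diff, Set.mem_setOf_eq]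
    tauto
  have hdisj : Disjoint (d1 \ d2) (d2 \ d1) := by
    rw [Set.disjoint_left]
    rintro e ⟨he1, he2⟩ ⟨he3, he4⟩
    exact he2 he3
  have hkey1 : (d1 ∩ d2).ncard + (d1 \ d2).ncard = d1.ncard :=
    Set.ncard_inter_add_ncard_diff_eq_ncard d1 d2 hf1
  have hkey2 : (d2 ∩ d1).ncard + (d2 \ d1).ncard = d2.ncard :=
    Set.ncard_inter_add_ncard_diff_eq_ncard d2 d1 hf2
  have hcomm : d2 ∩ d1 = d1 ∩ d2 := Set.inter_comm d2 d1
  rw [hcomm] at hkey2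
  have hU : degree ((C₁ \ C₂) ∪ (C₂ \ C₁)) p = (d1 \ d2).ncard + (d2 \ d1).ncard := by
    rw [degree, hD]
    exact Set.ncard_union_eq hdisj hf1.diff hf2.diff
  have hev : Even (d1.ncard + d2.ncard) := by
    have ha : Even (degree C₁ p) := e1 p
    have hb : Even (degree C₂ p) := e2 p
    rw [degree] at ha hb
    exact ha.add hb
  rw [hU]
  rw [Nat.even_iff] at hev ⊢
  omega


theorem stmt7 (m n : ℤ) (C₁ C₂ : Set Edge) (h₁ : IsCycle m n C₁) (h₂ : IsCycle m n C₂)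
    (hs : SameSignature m n C₁ C₂) : C₁.ncard = C₂.ncard := by
  classical
  obtain ⟨-, hg1, hd1, -⟩ := h₁
  obtain ⟨-, hg2, hd2, -⟩ := h₂
  have hfinG : {e : Edge | gridEdge m n e}.Finite := gridEdge_finite m n
  have hfin1 : C₁.Finite := hfinG.subset (fun e he => hg1 e he)
  have hfin2 : C₂.Finite := hfinG.subset (fun e he => hg2 e he)
  have hev1 : ∀ p : V, Even (degree C₁ p) := by
    intro p; rcases hd1 p with h | h <;> rw [h] <;> decide
  have hev2 : ∀ p : V, Even (degree C₂ p) := by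
    intro p; rcases hd2 p with h | h <;> rw [h] <;> decide
  set T : Set Edge := (C₁ \ C₂) ∪ (C₂ \ C₁) with hT
  have hgT : ∀ e ∈ T, gridEdge m n e := by
    rintro e (⟨h, -⟩ | ⟨h, -⟩)
    · exact hg1 e h
    · exact hg2 e h
  have hevT : ∀ p : V, Even (degree T p) := degree_symmDiff_even hfin1 hfin2 hev1 hev2
  set A : Set Edge := C₁ \ C₂ with hA
  set B : Set Edge := C₂ \ C₁ with hB
  have hAfin : A.Finite := hfin1.diff
  have hBfin : B.Finite := hfin2.diff
  have hAT : A ⊆ T := fun e he => Or.inl he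
  have hBT : B ⊆ T := fun e he => Or.inr he
  -- the finite set of odd-shadow cells
  have hSsub : {c : ℤ × ℤ | Ssh T c.1 c.2 = 1} ⊆ Set.Icc ((1 : ℤ), (1 : ℤ)) (m, n) := by
    intro c hc
    obtain ⟨b1, b2, b3, b4⟩ := Ssh_isCell hgT hevT hc
    rw [Set.mem_Icc, Prod.le_def, Prod.le_def]
    exact ⟨⟨b1, b3⟩, by constructor <;> simp only <;> omega⟩
  have hSfin : {c : ℤ × ℤ | Ssh T c.1 c.2 = 1}.Finite := (Set.finite_Icc _ _).subset hSsub
  set SF : Finset (ℤ × ℤ) := hSfin.toFinset with hSF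
  have hSFmem : ∀ c : ℤ × ℤ, c ∈ SF ↔ Ssh T c.1 c.2 = 1 := fun c =>
    Set.Finite.mem_toFinset hSfin
  -- per-cell equality of |A ∩ cell| and |B ∩ cell|
  have hcell : ∀ c : ℤ × ℤ, c ∈ SF →
      (A ∩ cellEdges c.1 c.2).ncard = (B ∩ cellEdges c.1 c.2).ncard := by
    intro c hc
    have hic : isCell m n c.1 c.2 := Ssh_isCell hgT hevT ((hSFmem c).mp hc)
    have hsig := hs c.1 c.2 hic
    rw [cellCount, cellCount] at hsig
    have hfc : (cellEdges c.1 c.2).Finite := by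
      rw [cellEdges]
      exact (((Set.finite_singleton _).insert _).insert _).insert _
    have e1 : C₁ ∩ cellEdges c.1 c.2 =
        (A ∩ cellEdges c.1 c.2) ∪ ((C₁ ∩ C₂) ∩ cellEdges c.1 c.2) := by
      ext e
      simp only [hA, Set.mem_inter_iff, Set.mem_union, Set.mem_diff]
      tauto
    have e2 : C₂ ∩ cellEdges c.1 c.2 =
        (B ∩ cellEdges c.1 c.2) ∪ ((C₁ ∩ C₂) ∩ cellEdges c.1 c.2) := by
      ext e
      simp only [hB, Set.mem_inter_iff, Set.mem_union, Set.mem_diff]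
      tauto
    have dj1 : Disjoint (A ∩ cellEdges c.1 c.2) ((C₁ ∩ C₂) ∩ cellEdges c.1 c.2) := by
      rw [Set.disjoint_left]
      rintro e ⟨he1, -⟩ ⟨he2, -⟩
      exact he1.2 he2.2
    have dj2 : Disjoint (B ∩ cellEdges c.1 c.2) ((C₁ ∩ C₂) ∩ cellEdges c.1 c.2) := by
      rw [Set.disjoint_left]
      rintro e ⟨he1, -⟩ ⟨he2, -⟩
      exact he1.2 he2.1
    have n1 : (C₁ ∩ cellEdges c.1 c.2).ncard =
        (A ∩ cellEdges c.1 c.2).ncard + ((C₁ ∩ C₂) ∩ cellEdges c.1 c.2).ncard := by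
      rw [e1]
      exact Set.ncard_union_eq dj1 (hAfin.inter_of_left _) ((hfin1.inter_of_left C₂).inter_of_left _)
    have n2 : (C₂ ∩ cellEdges c.1 c.2).ncard =
        (B ∩ cellEdges c.1 c.2).ncard + ((C₁ ∩ C₂) ∩ cellEdges c.1 c.2).ncard := by
      rw [e2]
      exact Set.ncard_union_eq dj2 (hBfin.inter_of_left _) ((hfin1.inter_of_left C₂).inter_of_left _)
    omega
  have cA : A.ncard = ∑ c ∈ SF, (A ∩ cellEdges c.1 c.2).ncard :=
    count_by_cells hgT hevT hAT hAfin hSFmem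
  have cB : B.ncard = ∑ c ∈ SF, (B ∩ cellEdges c.1 c.2).ncard :=
    count_by_cells hgT hevT hBT hBfin hSFmem
  have hAB : A.ncard = B.ncard := by
    rw [cA, cB]
    exact Finset.sum_congr rfl hcell
  -- assemble
  have f1 : C₁ = A ∪ (C₁ ∩ C₂) := by
    ext e
    simp only [hA, Set.mem_union, Set.mem_diff, Set.mem_inter_iff]
    tauto
  have f2 : C₂ = B ∪ (C₁ ∩ C₂) := by
    ext e
    simp only [hB, Set.mem_union, Set.mem_diff, Set.mem_inter_iff]
    tauto
  have dj1 : Disjoint A (C₁ ∩ C₂) := by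
    rw [Set.disjoint_left]
    rintro e ⟨-, he2⟩ ⟨-, he4⟩
    exact he2 he4
  have dj2 : Disjoint B (C₁ ∩ C₂) := by
    rw [Set.disjoint_left]
    rintro e ⟨-, he2⟩ ⟨he3, -⟩
    exact he2 he3
  calc C₁.ncard = (A ∪ (C₁ ∩ C₂)).ncard := by rw [← f1]
    _ = A.ncard + (C₁ ∩ C₂).ncard :=
        Set.ncard_union_eq dj1 hAfin (hfin1.inter_of_left C₂)
    _ = B.ncard + (C₁ ∩ C₂).ncard := by rw [hAB]
    _ = (B ∪ (C₁ ∩ C₂)).ncard :=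
        (Set.ncard_union_eq dj2 hBfin (hfin1.inter_of_left C₂)).symm
    _ = C₂.ncard := by rw [← f2]

end Slitherlink
end
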